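/- Let s(ω) = (5 + cos ω)/6. Then for all real ω, s(2ω) − cos²(ω/2)·s(ω) ≥ 0, and s(2ω) − cos²(ω/2)·s(ω) = O(|ω|⁴) as ω → 0. -/
import Mathlib


open Asymptotics in
/-- For `s(ω) = (5 + cos ω)/6`, the sub-QMF defect `s(2ω) − cos²(ω/2)·s(ω)` is
nonnegative for all real `ω`, and is `O(|ω|⁴)` as `ω → 0`. -/
theorem s212_subqmf_defect (s : ℝ → ℝ) (hs : ∀ ω, s ω = (5 + Real.cos ω) / 6) :
    (∀ ω : ℝ, 0 ≤ s (2 * ω) - Real.cos (ω / 2) ^ 2 * s ω) ∧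
    (fun ω : ℝ => s (2 * ω) - Real.cos (ω / 2) ^ 2 * s ω)
      =O[nhds (0 : ℝ)] fun ω : ℝ => |ω| ^ (4 : ℕ) := by
  have key : ∀ ω : ℝ, s (2 * ω) - Real.cos (ω / 2) ^ 2 * s ω
      = (Real.cos ω - 1) ^ 2 / 4 := by
    intro ω
    have hc : Real.cos (ω / 2) ^ 2 = 1 / 2 + Real.cos ω / 2 := by
      have := Real.cos_sq (ω / 2)
      rwa [show 2 * (ω / 2) = ω by ring] at this
    rw [hs, hs, Real.cos_two_mul, hc]
    ring
  refine ⟨fun ω => by rw [key]; positivity, ?_⟩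
  apply Asymptotics.IsBigO.of_bound (1 / 4)
  filter_upwards with ω
  have hsin : Real.sin (ω / 2) ^ 2 ≤ (ω / 2) ^ 2 := Real.sin_sq_le_sq
  have h1 : 1 - Real.cos ω = 2 * Real.sin (ω / 2) ^ 2 := by
    have := Real.cos_sq (ω / 2)
    have hpy := Real.sin_sq_add_cos_sq (ω / 2)
    rw [show 2 * (ω / 2) = ω by ring] at this
    nlinarith
  have hs2 : (0:ℝ) ≤ Real.sin (ω / 2) ^ 2 := sq_nonneg _
  have hb : (Real.cos ω - 1) ^ 2 / 4 ≤ (1 / 4) * ω ^ 4 := by nlinarith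
  rw [key]
  rw [Real.norm_eq_abs, Real.norm_eq_abs, abs_of_nonneg (by positivity),
    abs_of_nonneg (by positivity : (0:ℝ) ≤ |ω| ^ (4:ℕ))]
  calc (Real.cos ω - 1) ^ 2 / 4 ≤ (1/4) * ω ^ 4 := hb
    _ = 1 / 4 * |ω| ^ (4:ℕ) := by rw [← abs_pow]; rw [abs_of_nonneg (by positivity)]
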